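/- arXiv:1808.07160 — 3 statements merged into one kernel-verified Lean document; each statement's English description precedes it below -/
import Mathlib

section
/- For every singular cardinal κ there exists a family F of functions from cof(κ) to κ with |F| = 2^κ such that any two distinct f, g ∈ F agree on a set of cardinality less than cof(κ), provided κ is a strong limit cardinal. -/
/-!
Code a set `X ⊆ β` by the function sending `ξ` to an injective code in `β` of the trace of
`X` on a block `B ξ`. If the blocks cover `β` and have power sets no larger than `β`, this is
injective, and the codes of `X ≠ Y` can only agree at blocks missing a point of `X ∆ Y`.
For `κ` a strong limit, well-order `β` in type `κ` and take as blocks the initial segments below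
a cofinal sequence of length `cof κ`: each block has fewer than `κ` points, hence fewer than `κ`
subsets, and each point lies outside fewer than `cof κ` blocks.
-/

open Cardinal Set
open scoped symmDiff

section BlockCode

variable {α β γ : Type*} (B : α → Set β) (enc : ∀ ξ, Set (B ξ) → γ)

def blockCode (X : Set β) (ξ : α) : γ :=
  enc ξ (Subtype.val ⁻¹' X)

variable {B enc}

theorem blockCode_eq_blockCode_iff (henc : ∀ ξ, Function.Injective (enc ξ)) {X Y : Set β}
    {ξ : α} : blockCode B enc X ξ = blockCode B enc Y ξ ↔ B ξ ∩ X = B ξ ∩ Y :=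
  (henc ξ).eq_iff.trans Subtype.preimage_coe_eq_preimage_coe_iff

theorem blockCode_injective (henc : ∀ ξ, Function.Injective (enc ξ))
    (hcov : ∀ b, ∃ ξ, b ∈ B ξ) : Function.Injective (blockCode B enc) := by
  intro X Y h
  ext b
  obtain ⟨ξ, hb⟩ := hcov b
  have hXY := (blockCode_eq_blockCode_iff henc).1 (congrFun h ξ)
  simpa [hb] using Set.ext_iff.1 hXY b

theorem setOf_blockCode_eq_subset (henc : ∀ ξ, Function.Injective (enc ξ)) {X Y : Set β}
    {b : β} (hb : b ∈ X ∆ Y) :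
    {ξ | blockCode B enc X ξ = blockCode B enc Y ξ} ⊆ {ξ | b ∉ B ξ} := by
  intro ξ hξ hbξ
  have hXY := Set.ext_iff.1 ((blockCode_eq_blockCode_iff henc).1 hξ) b
  rw [mem_symmDiff] at hb
  simp only [mem_inter_iff, hbξ, true_and] at hXY
  tauto

end BlockCode

theorem exists_almostDisjoint_of_blockCover {α β : Type u} {μ : Cardinal} (B : α → Set β)
    (hB : ∀ ξ, 2 ^ #(B ξ) ≤ #β) (hcov : ∀ b, ∃ ξ, b ∈ B ξ)
    (hsmall : ∀ b, #{ξ // b ∉ B ξ} < μ) :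
    ∃ F : Set (α → β), #F = 2 ^ #β ∧
      ∀ f ∈ F, ∀ g ∈ F, f ≠ g → #{ξ // f ξ = g ξ} < μ := by
  have enc : ∀ ξ, Set (B ξ) ↪ β := fun ξ => (le_def _ _).1 (mk_set.trans_le (hB ξ)) |>.some
  have henc : ∀ ξ, Function.Injective (enc ξ) := fun ξ => (enc ξ).injective
  refine ⟨range (blockCode B (enc ·)), ?_, ?_⟩
  · rw [mk_range_eq _ (blockCode_injective henc hcov), mk_set]
  · rintro _ ⟨X, rfl⟩ _ ⟨Y, rfl⟩ hne
    obtain ⟨b, hb⟩ := symmDiff_nonempty.2 (ne_of_apply_ne _ hne)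
    exact (mk_le_mk_of_subset (setOf_blockCode_eq_subset henc hb)).trans_lt (hsmall b)

theorem exists_seq_card_setOf_le_lt_cof {W α : Type u} [LinearOrder W] [WellFoundedLT W]
    [NoMaxOrder W] (hα : #α = Order.cof W) :
    ∃ y : α → W, (∀ x, ∃ ξ, x < y ξ) ∧ ∀ x, #{ξ // y ξ ≤ x} < Order.cof W := by
  obtain ⟨s, hs, hs'⟩ := Ordinal.exists_ord_cof_eq W
  have hcard : #s = Order.cof W := by simpa using congrArg Ordinal.card hs'
  obtain ⟨e⟩ : Nonempty (α ≃ s) := Cardinal.eq.1 (hα.trans hcard.symm)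
  have hgt : ∀ x : W, ∃ t : s, x < t := fun x => by
    obtain ⟨x', hx'⟩ := exists_gt x
    obtain ⟨t, ht, hle⟩ := hs x'
    exact ⟨⟨t, ht⟩, hx'.trans_le hle⟩
  refine ⟨fun ξ => e ξ, fun x => ?_, fun x => ?_⟩
  · obtain ⟨t, ht⟩ := hgt x
    exact ⟨e.symm t, by simpa using ht⟩
  · obtain ⟨t, ht⟩ := hgt x
    calc #{ξ // (e ξ : W) ≤ x}
        ≤ #(Iio t) := mk_le_of_injective (f := fun ξ => ⟨e ξ.1, ξ.2.trans_lt ht⟩)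
          fun ξ ζ h => Subtype.ext (e.injective (congrArg Subtype.val h))
      _ < #s := mk_Iio_lt t (by rw [hcard, hs'])
      _ = Order.cof W := hcard

theorem stmt9_general (κ : Cardinal.{u})
    (hsl : κ.IsStrongLimit)
    (α β : Type u) (hα : #α = κ.ord.cof) (hβ : #β = κ) :
    ∃ F : Set (α → β), #F = 2 ^ κ ∧
      ∀ f ∈ F, ∀ g ∈ F, f ≠ g → #{ξ : α // f ξ = g ξ} < κ.ord.cof := by
  have := Cardinal.noMaxOrder hsl.aleph0_le
  obtain ⟨eβ⟩ : Nonempty (β ≃ κ.ord.ToType) := Cardinal.eq.1 (by simp [hβ])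
  obtain ⟨y, hcof, hbound⟩ :=
    exists_seq_card_setOf_le_lt_cof (hα.trans (Ordinal.cof_toType _).symm)
  have hblock : ∀ ξ, #(eβ ⁻¹' Iio (y ξ)) < κ := fun ξ => by
    simpa [mk_preimage_equiv] using mk_Iio_lt (y ξ) (by simp)
  simpa only [hβ, Ordinal.cof_toType] using
    exists_almostDisjoint_of_blockCover (fun ξ => eβ ⁻¹' Iio (y ξ))
    (fun ξ => hβ ▸ (hsl.isStrongPrelimit (hblock ξ)).le) (fun b => hcof (eβ b))
    (fun b => by simpa using hbound (eβ b))

theorem stmt9 (κ : Cardinal.{u})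
    (hsing : κ.ord.cof < κ)
    (hsl : κ.IsStrongLimit)
    (α β : Type u) (hα : #α = κ.ord.cof) (hβ : #β = κ) :
    ∃ F : Set (α → β), #F = 2 ^ κ ∧
      ∀ f ∈ F, ∀ g ∈ F, f ≠ g → #{ξ : α // f ξ = g ξ} < κ.ord.cof :=
  stmt9_general κ hsl α β hα hβ
end

section
/- Let κ be a singular strong limit cardinal of uncountable cofinality, and let J be an ideal on a set of size κ with κ ≤ |J| and |J| < cof(⟨J⟩, ⊆) where ⟨J⟩ is the σ-completion of J. Then 2^μ < cof(J, ⊆) for every cardinal μ < κ. -/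
open Cardinal

/-- The cofinality of a family of sets under inclusion. -/
noncomputable def cofFamily {α : Type u} (I : Set (Set α)) : Cardinal.{u} :=
  sInf {c | ∃ D : Set (Set α), D ⊆ I ∧ (∀ A ∈ I, ∃ B ∈ D, A ⊆ B) ∧ #D = c}

/-- The σ-completion of a family of sets: all countable unions of its members. -/
def sigmaCompletion {α : Type u} (J : Set (Set α)) : Set (Set α) :=
  {Y | ∃ A : ℕ → Set α, (∀ n, A n ∈ J) ∧ Y = ⋃ n, A n}

/-!
A cofinal subfamily `D ⊆ J` yields the cofinal subfamily of countable unions of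
members of `D` in `⟨J⟩`, so `cof ⟨J⟩ ≤ cof J ^ ℵ₀`. If `cof J ≤ 2 ^ μ` for some `μ < κ`, then
`cof ⟨J⟩ ≤ (2 ^ μ) ^ ℵ₀ = 2 ^ (μ · ℵ₀) < κ ≤ |J| < cof ⟨J⟩`, as `κ` is a strong limit
above `ℵ₀`.
-/

section cofFamily

variable {α : Type u}

lemma cofFamily_le_mk {I D : Set (Set α)} (hDI : D ⊆ I) (hD : ∀ A ∈ I, ∃ B ∈ D, A ⊆ B) :
    cofFamily I ≤ #D :=
  csInf_le (OrderBot.bddBelow _) ⟨D, hDI, hD, rfl⟩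

lemma exists_cofinal_mk_eq_cofFamily (I : Set (Set α)) :
    ∃ D ⊆ I, (∀ A ∈ I, ∃ B ∈ D, A ⊆ B) ∧ #D = cofFamily I :=
  csInf_mem (s := {c | ∃ D ⊆ I, (∀ A ∈ I, ∃ B ∈ D, A ⊆ B) ∧ #D = c})
    ⟨#I, I, subset_rfl, fun A hA => ⟨A, hA, subset_rfl⟩, rfl⟩

lemma cofFamily_sigmaCompletion_le (J : Set (Set α)) :
    cofFamily (sigmaCompletion J) ≤ cofFamily J ^ ℵ₀ := by
  obtain ⟨D, hDJ, hD, hDcard⟩ := exists_cofinal_mk_eq_cofFamily J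
  let unions : (ℕ → D) → Set α := fun f => ⋃ n, (f n : Set α)
  have hsub : Set.range unions ⊆ sigmaCompletion J := by
    rintro _ ⟨f, rfl⟩
    exact ⟨fun n => f n, fun n => hDJ (f n).2, rfl⟩
  have hcofinal : ∀ Y ∈ sigmaCompletion J, ∃ B ∈ Set.range unions, Y ⊆ B := by
    rintro Y ⟨A, hA, rfl⟩
    choose B hB hAB using fun n => hD (A n) (hA n)
    exact ⟨_, ⟨fun n => ⟨B n, hB n⟩, rfl⟩, Set.iUnion_mono hAB⟩
  calc cofFamily (sigmaCompletion J) ≤ #(Set.range unions) := cofFamily_le_mk hsub hcofinal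
    _ ≤ #(ℕ → D) := mk_range_le
    _ = cofFamily J ^ ℵ₀ := by simp [hDcard]

end cofFamily

lemma Cardinal.IsStrongPrelimit.two_power_power_aleph0_lt {κ μ : Cardinal}
    (hκ : IsStrongPrelimit κ) (hℵ₀ : ℵ₀ < κ) (hμ : μ < κ) : (2 ^ μ) ^ ℵ₀ < κ := by
  rw [← power_mul]
  exact hκ (mul_lt_of_lt hℵ₀.le hμ hℵ₀)

theorem stmt16_general (κ : Cardinal.{u})
    (hsl : κ.IsStrongLimit)
    (huncof : ℵ₀ < κ.ord.cof)
    {α : Type u}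
    (J : Set (Set α))
    (hJκ : κ ≤ #J)
    (hJcof : #J < cofFamily (sigmaCompletion J)) :
    ∀ μ < κ, 2 ^ μ < cofFamily J := by
  intro μ hμ
  by_contra! hcof
  have hℵ₀ : ℵ₀ < κ := huncof.trans_le (Ordinal.cof_ord_le κ)
  have := calc
    κ ≤ #J := hJκ
    _ < cofFamily (sigmaCompletion J) := hJcof
    _ ≤ cofFamily J ^ ℵ₀ := cofFamily_sigmaCompletion_le J
    _ ≤ (2 ^ μ) ^ ℵ₀ := power_le_power_right hcof
    _ < κ := hsl.isStrongPrelimit.two_power_power_aleph0_lt hℵ₀ hμ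
  exact this.false

theorem stmt16 (κ : Cardinal.{u})
    (hsing : κ.ord.cof < κ)
    (hsl : κ.IsStrongLimit)
    (huncof : ℵ₀ < κ.ord.cof)
    {α : Type u} (hα : #α = κ)
    (J : Set (Set α))
    (hdown : ∀ A ∈ J, ∀ B ⊆ A, B ∈ J)
    (hunion : ∀ A ∈ J, ∀ B ∈ J, A ∪ B ∈ J)
    (hfree : ∀ x : α, {x} ∈ J) (hproper : Set.univ ∉ J)
    (hJκ : κ ≤ #J)
    (hJcof : #J < cofFamily (sigmaCompletion J)) :
    ∀ μ < κ, 2 ^ μ < cofFamily J :=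
  stmt16_general κ hsl huncof J hJκ hJcof
end

section
/- Let κ be a singular strong limit cardinal of uncountable cofinality and J an ideal with κ ≤ cof(J, ⊆), |J| < cof(⟨J⟩, ⊆), and cof(⟨J⟩,⊆) ≤ cof(J,⊆)^{ℵ₀}. Then κ⁺ⁿ < cof(J, ⊆) for every natural number n. -/
open Cardinal

/-- The `n`-th cardinal successor of `κ`. -/
noncomputable def nthSucc (κ : Cardinal) : ℕ → Cardinal
  | 0 => κ
  | n + 1 => Order.succ (nthSucc κ n)

/-!
If `cof(J) = λ` with `λ ^ ℵ₀ = λ`, then `|J| < cof(σJ) ≤ λ ^ ℵ₀ = λ = cof(J) ≤ |J|`, which is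
absurd. Every `κ⁺ⁿ` satisfies `(κ⁺ⁿ) ^ ℵ₀ = κ⁺ⁿ`: for `κ` this uses that `κ` is a strong limit
of uncountable cofinality, and the successor steps are Hausdorff's formula. Hence `cof(J)`, being
at least `κ`, is none of the `κ⁺ⁿ` and so lies above all of them.
-/

universe u

namespace Cardinal

theorem exists_forall_lt_of_aleph0_lt_cof {c : Cardinal.{u}} (hcof : ℵ₀ < c.ord.cof)
    (f : ℕ → c.ord.ToType) : ∃ b, ∀ n, f n < b := by
  have hsmall : #(Set.range f) < Order.cof c.ord.ToType := by
    rw [Ordinal.cof_toType]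
    exact (Set.countable_range f).le_aleph0.trans_lt hcof
  have hnotCofinal : ¬ IsCofinal (Set.range f) := fun h => (Order.cof_le h).not_gt hsmall
  simp only [IsCofinal, not_forall, not_exists] at hnotCofinal
  obtain ⟨b, hb⟩ := hnotCofinal
  exact ⟨b, fun n => not_le.1 fun hle => hb _ ⟨⟨n, rfl⟩, hle⟩⟩

theorem power_aleph0_eq_self_of_aleph0_lt_cof {c : Cardinal.{u}} (hcof : ℵ₀ < c.ord.cof)
    (h : ∀ μ < c, μ ^ ℵ₀ ≤ c) : c ^ ℵ₀ = c := by
  have hc : ℵ₀ ≤ c := hcof.le.trans (Ordinal.cof_ord_le c)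
  refine le_antisymm ?_ (self_le_power c one_le_aleph0)
  have hbounded (b : c.ord.ToType) : #{f : ℕ → c.ord.ToType | ∀ n, f n < b} ≤ c :=
    calc #{f : ℕ → c.ord.ToType | ∀ n, f n < b} = #(Set.Iio b) ^ ℵ₀ := by
          rw [Set.coe_ofPred, mk_congr (Equiv.subtypePiEquivPi (p := fun _ x => x < b))]
          simp only [mk_pi, prod_const, lift_uzero, mk_nat, lift_aleph0]; rfl
      _ ≤ c := h _ (by simpa using mk_Iio_lt b)
  have hcover : ⋃ b : c.ord.ToType, {f : ℕ → c.ord.ToType | ∀ n, f n < b} = Set.univ :=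
    Set.eq_univ_of_forall fun f => Set.mem_iUnion.2 (exists_forall_lt_of_aleph0_lt_cof hcof f)
  calc c ^ ℵ₀ = #(ℕ → c.ord.ToType) := by simp
    _ = #(⋃ b : c.ord.ToType, {f : ℕ → c.ord.ToType | ∀ n, f n < b}) := by rw [hcover, mk_univ]
    _ ≤ #c.ord.ToType * ⨆ b, #{f : ℕ → c.ord.ToType | ∀ n, f n < b} := mk_iUnion_le _
    _ ≤ c * c := mul_le_mul' (by simp) (ciSup_le' hbounded)
    _ = c := mul_eq_self hc

theorem succ_power_aleph0_eq_self {c : Cardinal.{u}} (hc : ℵ₀ ≤ c) (hpow : c ^ ℵ₀ = c) :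
    Order.succ c ^ ℵ₀ = Order.succ c := by
  refine power_aleph0_eq_self_of_aleph0_lt_cof ?_ fun μ hμ => ?_
  · rw [(isRegular_succ hc).cof_ord]
    exact hc.trans_lt (Order.lt_succ c)
  · calc μ ^ ℵ₀ ≤ c ^ ℵ₀ := power_le_power_right (Order.lt_succ_iff.1 hμ)
      _ = c := hpow
      _ ≤ Order.succ c := Order.le_succ c

theorem IsStrongLimit.power_aleph0_eq_self {κ : Cardinal.{u}} (hsl : κ.IsStrongLimit)
    (hcof : ℵ₀ < κ.ord.cof) : κ ^ ℵ₀ = κ := by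
  refine power_aleph0_eq_self_of_aleph0_lt_cof hcof fun μ hμ => ?_
  calc μ ^ ℵ₀ ≤ (2 ^ (μ ⊔ ℵ₀)) ^ ℵ₀ :=
        power_le_power_right ((cantor μ).le.trans (power_le_power_left two_ne_zero le_sup_left))
    _ = 2 ^ (μ ⊔ ℵ₀) := by rw [← power_mul, mul_aleph0_eq le_sup_right]
    _ ≤ κ := (hsl.isStrongPrelimit (max_lt hμ (hcof.trans_le (Ordinal.cof_ord_le κ)))).le

end Cardinal

theorem le_nthSucc (κ : Cardinal) : ∀ n, κ ≤ nthSucc κ n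
  | 0 => le_rfl
  | n + 1 => (le_nthSucc κ n).trans (Order.le_succ _)

theorem nthSucc_power_aleph0_eq_self {κ : Cardinal} (hκ : ℵ₀ ≤ κ) (hpow : κ ^ ℵ₀ = κ) :
    ∀ n, nthSucc κ n ^ ℵ₀ = nthSucc κ n
  | 0 => hpow
  | n + 1 => succ_power_aleph0_eq_self (hκ.trans (le_nthSucc κ n))
      (nthSucc_power_aleph0_eq_self hκ hpow n)

theorem cofFamily_le_mk_s17 {α : Type u} (I : Set (Set α)) : cofFamily I ≤ #I :=
  csInf_le' ⟨I, subset_rfl, fun A hA => ⟨A, hA, subset_rfl⟩, rfl⟩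

theorem cofFamily_power_aleph0_ne_self {α : Type u} {J : Set (Set α)}
    (hJcof : #J < cofFamily (sigmaCompletion J))
    (hcofs : cofFamily (sigmaCompletion J) ≤ cofFamily J ^ ℵ₀) :
    cofFamily J ^ ℵ₀ ≠ cofFamily J := fun hpow =>
  (hJcof.trans_le ((hpow ▸ hcofs).trans (cofFamily_le_mk_s17 J))).false

theorem stmt17_general (κ : Cardinal.{u})
    (hsl : κ.IsStrongLimit)
    (huncof : ℵ₀ < κ.ord.cof)
    {α : Type u}
    (J : Set (Set α))
    (hκcof : κ ≤ cofFamily J)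
    (hJcof : #J < cofFamily (sigmaCompletion J))
    (hcofs : cofFamily (sigmaCompletion J) ≤ (cofFamily J) ^ ℵ₀) :
    ∀ n : ℕ, nthSucc κ n < cofFamily J := by
  have hκ : ℵ₀ ≤ κ := huncof.le.trans (Ordinal.cof_ord_le κ)
  have hne (n : ℕ) : nthSucc κ n ≠ cofFamily J := fun h =>
    cofFamily_power_aleph0_ne_self hJcof hcofs
      (h ▸ nthSucc_power_aleph0_eq_self hκ (hsl.power_aleph0_eq_self huncof) n)
  intro n
  induction n with
  | zero => exact hκcof.lt_of_ne (hne 0)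
  | succ n ih => exact (Order.succ_le_of_lt ih).lt_of_ne (hne (n + 1))

theorem stmt17 (κ : Cardinal.{u})
    (hsing : κ.ord.cof < κ)
    (hsl : κ.IsStrongLimit)
    (huncof : ℵ₀ < κ.ord.cof)
    {α : Type u}
    (J : Set (Set α))
    (hκcof : κ ≤ cofFamily J)
    (hJcof : #J < cofFamily (sigmaCompletion J))
    (hcofs : cofFamily (sigmaCompletion J) ≤ (cofFamily J) ^ ℵ₀) :
    ∀ n : ℕ, nthSucc κ n < cofFamily J :=
  stmt17_general κ hsl huncof J hκcof hJcof hcofs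
end
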